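/- arXiv:1807.06363 — 3 statements merged into one kernel-verified Lean document; each statement's English description precedes it below -/
import Mathlib

section
/- For ℓ ∈ (0, π) let ρ(s) = (ℓ/(2π)) · (cos(ℓs/(2π)))⁻¹ and X(ℓ) = (2π/ℓ)(π/2 − arctan(sinh(ℓ/2))). Then ∫₀^{X(ℓ)} ρ(s)^{1/2} ds ≤ 2√2 π ℓ^{-1/2}. -/
open Set

private lemma aux_deriv (C a r : ℝ) (ha : a ≠ 0) (hr : r ≠ 0) :
    C * r⁻¹ = -(2 / a) * C * (1 / (2 * r) * -a) := by
  field_simp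

/-- For the collar conformal factor `ρ(s) = (ℓ/2π) sec(ℓ s/2π)` and
`X(ℓ) = (2π/ℓ)(π/2 − arctan(sinh(ℓ/2)))`, one has `∫₀^{X(ℓ)} ρ^{1/2} ≤ 2√2 π ℓ^{-1/2}`. -/
theorem stmt2 (ℓ : ℝ) (hℓ : ℓ ∈ Ioo 0 Real.pi) :
    ∫ s in (0:ℝ)..((2 * Real.pi / ℓ) * (Real.pi / 2 - Real.arctan (Real.sinh (ℓ / 2)))),
        Real.sqrt ((ℓ / (2 * Real.pi)) * (Real.cos (ℓ * s / (2 * Real.pi)))⁻¹)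
      ≤ 2 * Real.sqrt 2 * Real.pi * (Real.sqrt ℓ)⁻¹ := by
  obtain ⟨hl0, hlpi⟩ := hℓ
  have hpi := Real.pi_pos
  set a : ℝ := ℓ / (2 * Real.pi) with ha_def
  have ha : 0 < a := by positivity
  set t : ℝ := Real.arctan (Real.sinh (ℓ / 2)) with ht_def
  have ht0 : 0 < t := by
    rw [ht_def, ← Real.arctan_zero]
    exact Real.arctan_strictMono (Real.sinh_pos_iff.2 (by positivity))
  have htlt : t < Real.pi / 2 := Real.arctan_lt_pi_div_two _
  set U : ℝ := Real.pi / 2 - t with hU_def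
  have hU0 : 0 < U := by simp [hU_def]; linarith
  have hUlt : U < Real.pi / 2 := by simp [hU_def]; linarith
  set X : ℝ := (2 * Real.pi / ℓ) * U with hX_def
  have hX0 : 0 ≤ X := by positivity
  have haX : a * X = U := by
    rw [ha_def, hX_def, ← mul_assoc, div_mul_div_comm, mul_comm ℓ, div_self (by positivity), one_mul]
  -- positivity of π/2 - a*s on [0,X]
  have hpos : ∀ s ∈ Icc (0:ℝ) X, 0 < Real.pi / 2 - a * s := by
    intro s hs
    have : a * s ≤ U := by
      rw [← haX]; exact mul_le_mul_of_nonneg_left hs.2 ha.le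
    have : a * s < Real.pi / 2 := lt_of_le_of_lt this hUlt
    linarith
  have hcospos : ∀ s ∈ Icc (0:ℝ) X, 0 < Real.cos (a * s) := by
    intro s hs
    apply Real.cos_pos_of_mem_Ioo
    constructor
    · have : 0 ≤ a * s := mul_nonneg ha.le hs.1
      linarith
    · have := hpos s hs; linarith
  set C : ℝ := Real.sqrt (a * (Real.pi / 2)) with hC_def
  set g : ℝ → ℝ := fun s => C * (Real.sqrt (Real.pi / 2 - a * s))⁻¹ with hg_def
  have harg : ∀ s : ℝ, ℓ * s / (2 * Real.pi) = a * s := by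
    intro s; rw [ha_def]; ring
  -- pointwise bound
  have hle : ∀ s ∈ Icc (0:ℝ) X,
      Real.sqrt (a * (Real.cos (ℓ * s / (2 * Real.pi)))⁻¹) ≤ g s := by
    intro s hs
    rw [harg]
    have h1 : 2 / Real.pi * (Real.pi / 2 - a * s) ≤ Real.cos (a * s) := by
      have := Real.one_sub_mul_le_cos (x := a * s) (mul_nonneg ha.le hs.1)
        (by have := hpos s hs; linarith)
      have hne : Real.pi ≠ 0 := hpi.ne'
      calc 2 / Real.pi * (Real.pi / 2 - a * s)
          = 1 - 2 / Real.pi * (a * s) := by field_simp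
        _ ≤ Real.cos (a * s) := this
    have h2 : (Real.cos (a * s))⁻¹ ≤ (2 / Real.pi * (Real.pi / 2 - a * s))⁻¹ := by
      apply inv_anti₀ _ h1
      have := hpos s hs; positivity
    have h3 : a * (Real.cos (a * s))⁻¹ ≤ (a * (Real.pi / 2)) * (Real.pi / 2 - a * s)⁻¹ := by
      have hps := hpos s hs
      calc a * (Real.cos (a * s))⁻¹ ≤ a * (2 / Real.pi * (Real.pi / 2 - a * s))⁻¹ :=
            mul_le_mul_of_nonneg_left h2 ha.le
        _ = (a * (Real.pi / 2)) * (Real.pi / 2 - a * s)⁻¹ := by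
            rw [mul_inv]
            have : (2 / Real.pi)⁻¹ = Real.pi / 2 := by field_simp
            rw [this]; ring
    calc Real.sqrt (a * (Real.cos (a * s))⁻¹)
        ≤ Real.sqrt ((a * (Real.pi / 2)) * (Real.pi / 2 - a * s)⁻¹) := Real.sqrt_le_sqrt h3
      _ = g s := by
          rw [Real.sqrt_mul (by positivity), Real.sqrt_inv]
  -- continuity/integrability
  have hcont_f : ContinuousOn
      (fun s => Real.sqrt (a * (Real.cos (ℓ * s / (2 * Real.pi)))⁻¹)) (Icc 0 X) := by
    apply Real.continuous_sqrt.comp_continuousOn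
    apply ContinuousOn.mul continuousOn_const
    apply ContinuousOn.inv₀
    · exact (Real.continuous_cos.comp ((continuous_const.mul continuous_id).div_const _)).continuousOn
    · intro s hs
      rw [harg]
      exact (hcospos s hs).ne'
  have hcont_g : ContinuousOn g (Icc 0 X) := by
    apply ContinuousOn.mul continuousOn_const
    apply ContinuousOn.inv₀
    · exact (Real.continuous_sqrt.comp (continuous_const.sub (continuous_const.mul continuous_id))).continuousOn
    · intro s hs
      exact (Real.sqrt_pos.2 (hpos s hs)).ne'
  have hint_f := hcont_f.intervalIntegrable_of_Icc (μ := MeasureTheory.volume) hX0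
  have hint_g := hcont_g.intervalIntegrable_of_Icc (μ := MeasureTheory.volume) hX0
  have hmono := intervalIntegral.integral_mono_on hX0 hint_f hint_g hle
  -- compute ∫ g via antiderivative
  set F : ℝ → ℝ := fun s => -(2 / a) * C * Real.sqrt (Real.pi / 2 - a * s) with hF_def
  have hderiv : ∀ s ∈ uIcc (0:ℝ) X, HasDerivAt F (g s) s := by
    intro s hs
    rw [uIcc_of_le hX0] at hs
    have hps := hpos s hs
    have hinner : HasDerivAt (fun s : ℝ => Real.pi / 2 - a * s) (-a) s := by
      simpa using ((hasDerivAt_id s).const_mul a).const_sub (Real.pi / 2)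
    have hsq : HasDerivAt (fun s : ℝ => Real.sqrt (Real.pi / 2 - a * s))
        (1 / (2 * Real.sqrt (Real.pi / 2 - a * s)) * (-a)) s :=
      (Real.hasDerivAt_sqrt hps.ne').comp s hinner
    have := hsq.const_mul (-(2 / a) * C)
    have hsne : Real.sqrt (Real.pi / 2 - a * s) ≠ 0 := (Real.sqrt_pos.2 hps).ne'
    have key : g s = -(2 / a) * C * (1 / (2 * Real.sqrt (Real.pi / 2 - a * s)) * -a) := by
      rw [hg_def]
      exact aux_deriv C a _ ha.ne' hsne
    rw [key]; exact this
  have hcalc : ∫ s in (0:ℝ)..X, g s = F X - F 0 :=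
    intervalIntegral.integral_eq_sub_of_hasDerivAt hderiv hint_g
  -- final numeric estimate
  have hFX : F X - F 0 ≤ (2 / a) * C * Real.sqrt (Real.pi / 2) := by
    rw [hF_def]
    simp only [mul_zero, sub_zero]
    have h1 : 0 ≤ Real.sqrt (Real.pi / 2 - a * X) := Real.sqrt_nonneg _
    have h2 : 0 ≤ (2 / a) * C := by positivity
    nlinarith [Real.sqrt_nonneg (Real.pi / 2)]
  have hsapos : 0 < Real.sqrt a := Real.sqrt_pos.2 ha
  have hval : (2 / a) * C * Real.sqrt (Real.pi / 2) = Real.pi / Real.sqrt a := by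
    have hs2 : Real.sqrt (Real.pi / 2) * Real.sqrt (Real.pi / 2) = Real.pi / 2 :=
      Real.mul_self_sqrt (by positivity)
    have hsa : Real.sqrt a * Real.sqrt a = a := Real.mul_self_sqrt ha.le
    rw [hC_def, Real.sqrt_mul ha.le, eq_div_iff hsapos.ne']
    calc 2 / a * (Real.sqrt a * Real.sqrt (Real.pi / 2)) * Real.sqrt (Real.pi / 2) * Real.sqrt a
        = 2 / a * (Real.sqrt a * Real.sqrt a) * (Real.sqrt (Real.pi / 2) * Real.sqrt (Real.pi / 2)) := by
          ring
      _ = 2 / a * a * (Real.pi / 2) := by rw [hsa, hs2]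
      _ = Real.pi := by rw [div_mul_cancel₀ _ ha.ne']; ring
  have hfin : Real.pi / Real.sqrt a ≤ 2 * Real.sqrt 2 * Real.pi * (Real.sqrt ℓ)⁻¹ := by
    have hsl : 0 < Real.sqrt ℓ := Real.sqrt_pos.2 hl0
    have hsa' : Real.sqrt a = Real.sqrt ℓ / Real.sqrt (2 * Real.pi) := by
      rw [ha_def, Real.sqrt_div hl0.le]
    have h8 : Real.sqrt 8 = 2 * Real.sqrt 2 := by
      rw [show (8:ℝ) = 2 ^ 2 * 2 by norm_num, Real.sqrt_mul (by positivity),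
        Real.sqrt_sq (by norm_num)]
    have hkey : Real.sqrt (2 * Real.pi) ≤ 2 * Real.sqrt 2 := by
      rw [← h8]
      exact Real.sqrt_le_sqrt (by nlinarith [Real.pi_le_four])
    rw [hsa', div_div_eq_mul_div, mul_comm (2 * Real.sqrt 2 * Real.pi), ← div_eq_inv_mul]
    have hnum : Real.pi * Real.sqrt (2 * Real.pi) ≤ 2 * Real.sqrt 2 * Real.pi := by
      nlinarith [hkey, hpi]
    exact div_le_div_of_nonneg_right hnum hsl.le
  calc _ ≤ ∫ s in (0:ℝ)..X, g s := hmono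
    _ = F X - F 0 := hcalc
    _ ≤ (2 / a) * C * Real.sqrt (Real.pi / 2) := hFX
    _ = Real.pi / Real.sqrt a := hval
    _ ≤ _ := hfin
end

section
/- Let ℓ ∈ (0, arsinh 1), ρ(s) = (ℓ/(2π))(cos(ℓs/(2π)))⁻¹ and X(ℓ) ∈ [(2π/ℓ)(π/2 − c̄₂ℓ), (2π/ℓ)(π/2 − c̄₁ℓ)] for fixed constants c̄₁, c̄₂ > 0. Then there exists a constant C depending only on c̄₁ (and an upper bound on ℓ) such that for all s ∈ [−X(ℓ), X(ℓ)], sup_{|q| ≤ X(ℓ)} e^{−|s−q|/2} ρ(q) ≤ C ρ(s). -/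
open Set

set_option maxHeartbeats 1600000

/-- Exponential-weight comparison estimate for the collar conformal factor
`ρ(s) = (ℓ/2π) sec(ℓ s/2π)`: `e^{−|s−q|/2} ρ(q) ≤ C ρ(s)`, with `C` depending
only on the constant `c̄₁` bounding `X(ℓ)` from above. -/
theorem stmt11 (c₁ : ℝ) (hc₁ : 0 < c₁) :
    ∃ C > 0, ∀ c₂ ℓ X : ℝ, 0 < c₂ → ℓ ∈ Ioo 0 (Real.arsinh 1) →
      (2 * Real.pi / ℓ) * (Real.pi / 2 - c₂ * ℓ) ≤ X →
      X ≤ (2 * Real.pi / ℓ) * (Real.pi / 2 - c₁ * ℓ) →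
      ∀ s ∈ Icc (-X) X, ∀ q ∈ Icc (-X) X,
        Real.exp (-|s - q| / 2) * ((ℓ / (2 * Real.pi)) * (Real.cos (ℓ * q / (2 * Real.pi)))⁻¹)
          ≤ C * ((ℓ / (2 * Real.pi)) * (Real.cos (ℓ * s / (2 * Real.pi)))⁻¹) := by
  have hπ := Real.pi_pos
  refine ⟨max (Real.pi/2) (1/(2*c₁)), lt_max_of_lt_left (by positivity), ?_⟩
  set C := max (Real.pi/2) (1/(2*c₁)) with hCdef
  have hCπ : Real.pi/2 ≤ C := le_max_left _ _
  have hCc : 1/(2*c₁) ≤ C := le_max_right _ _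
  have hC0 : 0 ≤ C := le_trans (by positivity) hCπ
  intro c₂ ℓ X hc₂ hℓ hX1 hX2 s hs q hq
  have hℓ0 : 0 < ℓ := hℓ.1
  set a := ℓ / (2*Real.pi) with ha
  have ha0 : 0 < a := by positivity
  have hsX : |s| ≤ X := abs_le.mpr hs
  have hqX : |q| ≤ X := abs_le.mpr hq
  have haX : a * X ≤ Real.pi/2 - c₁*ℓ := by
    have h1 : a * ((2*Real.pi/ℓ) * (Real.pi/2 - c₁*ℓ)) = Real.pi/2 - c₁*ℓ := by
      rw [ha]; field_simp
    nlinarith [mul_le_mul_of_nonneg_left hX2 ha0.le]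
  set d := |s - q| with hd
  have hd0 : 0 ≤ d := abs_nonneg _
  have key : ∀ t : ℝ, |t| ≤ X →
      (2/Real.pi) * (Real.pi/2 - a*|t|) ≤ Real.cos (ℓ * t / (2*Real.pi)) ∧
      Real.cos (ℓ * t / (2*Real.pi)) ≤ Real.pi/2 - a*|t| := by
    intro t ht
    have hat : a * |t| ≤ Real.pi/2 - c₁*ℓ :=
      le_trans (mul_le_mul_of_nonneg_left ht ha0.le) haX
    have hu0 : 0 < Real.pi/2 - a*|t| := by nlinarith
    have hu2 : Real.pi/2 - a*|t| ≤ Real.pi/2 := by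
      nlinarith [mul_nonneg ha0.le (abs_nonneg t)]
    have hcos : Real.cos (ℓ * t / (2*Real.pi)) = Real.sin (Real.pi/2 - a*|t|) := by
      rw [Real.sin_pi_div_two_sub]
      have h1 : ℓ * t / (2*Real.pi) = a * t := by rw [ha]; ring
      rw [h1, ← Real.cos_abs, abs_mul, abs_of_pos ha0]
    constructor
    · rw [hcos]; exact Real.mul_le_sin hu0.le hu2
    · rw [hcos]; exact Real.sin_le hu0.le
  obtain ⟨hqlo, -⟩ := key q hqX
  obtain ⟨hslo, hshi⟩ := key s hsX
  have huq : c₁*ℓ ≤ Real.pi/2 - a*|q| := by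
    nlinarith [mul_le_mul_of_nonneg_left hqX ha0.le]
  have huq0 : 0 < Real.pi/2 - a*|q| := lt_of_lt_of_le (by positivity) huq
  have hus0 : 0 < Real.pi/2 - a*|s| := by
    nlinarith [mul_le_mul_of_nonneg_left hsX ha0.le]
  have hcq0 : 0 < Real.cos (ℓ * q / (2*Real.pi)) :=
    lt_of_lt_of_le (mul_pos (by positivity) huq0) hqlo
  have hcs0 : 0 < Real.cos (ℓ * s / (2*Real.pi)) :=
    lt_of_lt_of_le (mul_pos (by positivity) hus0) hslo
  have hus_uq : Real.pi/2 - a*|s| ≤ (Real.pi/2 - a*|q|) + a*d := by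
    have h1 : |q| - |s| ≤ d := by
      calc |q| - |s| ≤ |q - s| := abs_sub_abs_le_abs_sub q s
        _ = d := by rw [hd, abs_sub_comm]
    nlinarith
  have hCu : ℓ/2 ≤ C * (Real.pi/2 - a*|q|) := by
    have h1 : (1/(2*c₁)) * (c₁*ℓ) ≤ C * (Real.pi/2 - a*|q|) :=
      mul_le_mul hCc huq (by positivity) hC0
    have h2 : (1/(2*c₁)) * (c₁*ℓ) = ℓ/2 := by field_simp
    linarith
  have hpa : Real.pi * (a*d) = ℓ/2 * d := by rw [ha]; field_simp
  have h1d0 : (0:ℝ) ≤ 1 + d/2 := by linarith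
  -- main polynomial estimate, multiplied through by π
  have hmain : Real.pi * (Real.pi/2 - a*|s|) ≤ 2*C*(1+d/2)*(Real.pi/2 - a*|q|) := by
    have hπus := mul_le_mul_of_nonneg_left hus_uq hπ.le
    have hCud : (ℓ/2)*d ≤ (C * (Real.pi/2 - a*|q|))*d := mul_le_mul_of_nonneg_right hCu hd0
    have h2Cu : Real.pi * (Real.pi/2 - a*|q|) ≤ 2*C*(Real.pi/2 - a*|q|) :=
      mul_le_mul_of_nonneg_right (by linarith) huq0.le
    linarith [hπus, hCud, h2Cu, hpa]
  -- hence cos(a s) ≤ C (1+d/2) cos(a q)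
  have h5 : 2*(Real.pi/2 - a*|q|) ≤ Real.pi * Real.cos (ℓ * q / (2*Real.pi)) := by
    have := mul_le_mul_of_nonneg_left hqlo hπ.le
    have h2 : Real.pi * ((2/Real.pi) * (Real.pi/2 - a*|q|)) = 2*(Real.pi/2 - a*|q|) := by
      field_simp
    linarith
  have h6 : Real.cos (ℓ * s / (2*Real.pi)) ≤ C*(1+d/2)*Real.cos (ℓ * q / (2*Real.pi)) := by
    have h7 := mul_le_mul_of_nonneg_left h5 (mul_nonneg hC0 h1d0)
    have h8 : Real.pi * Real.cos (ℓ * s / (2*Real.pi))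
        ≤ Real.pi * (C*(1+d/2)*Real.cos (ℓ * q / (2*Real.pi))) := by
      nlinarith [mul_le_mul_of_nonneg_left hshi hπ.le, hmain, h7]
    exact le_of_mul_le_mul_left h8 hπ
  have hexp : 1 + d/2 ≤ Real.exp (d/2) := by
    have := Real.add_one_le_exp (d/2); linarith
  have h9 : Real.exp (-d/2) * (1+d/2) ≤ 1 := by
    rw [neg_div, Real.exp_neg, inv_mul_le_iff₀ (Real.exp_pos _), mul_one]
    exact hexp
  have hfin : Real.exp (-d/2) * Real.cos (ℓ * s / (2*Real.pi))
      ≤ C * Real.cos (ℓ * q / (2*Real.pi)) := by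
    calc Real.exp (-d/2) * Real.cos (ℓ * s / (2*Real.pi))
        ≤ Real.exp (-d/2) * (C*(1+d/2)*Real.cos (ℓ * q / (2*Real.pi))) :=
          mul_le_mul_of_nonneg_left h6 (Real.exp_pos _).le
      _ = (Real.exp (-d/2) * (1+d/2)) * (C * Real.cos (ℓ * q / (2*Real.pi))) := by ring
      _ ≤ 1 * (C * Real.cos (ℓ * q / (2*Real.pi))) :=
          mul_le_mul_of_nonneg_right h9 (mul_nonneg hC0 hcq0.le)
      _ = _ := one_mul _
  calc Real.exp (-d/2) * (a * (Real.cos (ℓ * q / (2*Real.pi)))⁻¹)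
      = a * (Real.exp (-d/2) / Real.cos (ℓ * q / (2*Real.pi))) := by ring
    _ ≤ a * (C / Real.cos (ℓ * s / (2*Real.pi))) := by
        refine mul_le_mul_of_nonneg_left ?_ ha0.le
        rw [div_le_div_iff₀ hcq0 hcs0]
        linarith [hfin]
    _ = C * (a * (Real.cos (ℓ * s / (2*Real.pi)))⁻¹) := by ring
end

section
/- For C > 0 sufficiently large, the function G(r) = r² (C exp(1 − 1/(1 − r²)) + 1) on [0, 1) (extended by G(r) = r² for r ≥ 1) has exactly two critical points 0 < r_max < r_min < 1 in (0, 1), with G increasing on (0, r_max), decreasing on (r_max, r_min), and increasing on (r_min, 1); moreover r_max → (√5 − 1)/2 and r_min → 1 as C → ∞. -/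
open Set Filter

noncomputable section

/-- `G(r) = r² ρ̃²(r)` where `ρ̃² = C exp(1 − 1/(1−r²)) 𝟙_{|r|<1} + 1`. -/
def Gfun (C r : ℝ) : ℝ :=
  r ^ 2 * ((if |r| < 1 then C * Real.exp (1 - 1 / (1 - r ^ 2)) else 0) + 1)


def phi0 : ℝ := (Real.sqrt 5 - 1) / 2
def rstar : ℝ := Real.sqrt (2/3)

def Ffun (r : ℝ) : ℝ := Real.exp (1 - (1 - r^2)⁻¹) * (r^2 * ((1 - r^2)^2)⁻¹ - 1)

lemma phi0_sq : phi0 ^ 2 + phi0 = 1 := by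
  have h5 : Real.sqrt 5 ^ 2 = 5 := Real.sq_sqrt (by norm_num)
  unfold phi0; nlinarith [h5]

lemma phi0_pos : 0 < phi0 := by
  have h5 : Real.sqrt 5 ^ 2 = 5 := Real.sq_sqrt (by norm_num)
  have h := Real.sqrt_nonneg 5
  unfold phi0; nlinarith

lemma rstar_sq : rstar ^ 2 = 2/3 := Real.sq_sqrt (by norm_num)

lemma rstar_nonneg : 0 ≤ rstar := Real.sqrt_nonneg _

lemma rstar_lt_one : rstar < 1 := by
  have := rstar_sq
  nlinarith [rstar_nonneg]

lemma phi0_lt_rstar : phi0 < rstar := by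
  have h1 := phi0_sq
  have h2 := rstar_sq
  have h3 := phi0_pos
  have h4 := rstar_nonneg
  nlinarith

lemma phi0_lt_one : phi0 < 1 := lt_trans phi0_lt_rstar rstar_lt_one
lemma hasDerivAt_Ffun {r : ℝ} (h : r ^ 2 < 1) :
    HasDerivAt Ffun (Real.exp (1 - (1 - r^2)⁻¹) * (2*r*(2 - 3*r^2) / (1 - r^2)^4)) r := by
  have hu : (1 : ℝ) - r ^ 2 ≠ 0 := by nlinarith
  have h1 : HasDerivAt (fun r : ℝ => 1 - r ^ 2) (-(2 * r)) r := by
    simpa using (hasDerivAt_pow 2 r).const_sub 1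
  have h2 : HasDerivAt (fun r : ℝ => (1 - r ^ 2)⁻¹) (-(-(2 * r)) / (1 - r^2)^2) r := h1.inv hu
  have h3 : HasDerivAt (fun r : ℝ => 1 - (1 - r ^ 2)⁻¹) (-(-(-(2 * r)) / (1 - r^2)^2)) r :=
    h2.const_sub 1
  have hE : HasDerivAt (fun r : ℝ => Real.exp (1 - (1 - r ^ 2)⁻¹))
      (Real.exp (1 - (1 - r^2)⁻¹) * (-(-(-(2 * r)) / (1 - r^2)^2))) r := h3.exp
  have hden : HasDerivAt (fun r : ℝ => ((1 - r ^ 2)^2)⁻¹)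
      (-(↑2 * (1 - r^2) ^ 1 * -(2 * r)) / ((1 - r^2)^2)^2) r :=
    (h1.pow 2).inv (pow_ne_zero 2 hu)
  have hg : HasDerivAt (fun r : ℝ => r ^ 2 * ((1 - r ^ 2)^2)⁻¹ - 1)
      ((↑2 * r ^ 1) * ((1 - r^2)^2)⁻¹ + r^2 * (-(↑2 * (1 - r^2) ^ 1 * -(2 * r)) / ((1 - r^2)^2)^2)) r :=
    ((hasDerivAt_pow 2 r).mul hden).sub_const 1
  have : HasDerivAt (fun r : ℝ => Real.exp (1 - (1 - r ^ 2)⁻¹) * (r ^ 2 * ((1 - r ^ 2)^2)⁻¹ - 1)) _ r := hE.mul hg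
  refine HasDerivAt.congr_deriv this ?_
  field_simp
  ring

lemma continuousAt_Ffun {r : ℝ} (h : r ^ 2 < 1) : ContinuousAt Ffun r :=
  (hasDerivAt_Ffun h).continuousAt

lemma contOn_Ffun {a b : ℝ} (ha : 0 ≤ a) (hb : b < 1) : ContinuousOn Ffun (Icc a b) := by
  intro x hx
  have hx2 : x ^ 2 < 1 := by
    have h1 : -1 < x := by linarith [hx.1]
    have h2 : x < 1 := lt_of_le_of_lt hx.2 hb
    nlinarith
  exact (continuousAt_Ffun hx2).continuousWithinAt

lemma strictMonoOn_Ffun : StrictMonoOn Ffun (Icc 0 rstar) := by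
  apply strictMonoOn_of_deriv_pos (convex_Icc _ _) (contOn_Ffun le_rfl rstar_lt_one)
  intro x hx
  rw [interior_Icc] at hx
  have hx2 : x ^ 2 < 2/3 := by
    have := rstar_sq; nlinarith [hx.1, hx.2, rstar_nonneg]
  have hx1 : x ^ 2 < 1 := by linarith
  rw [(hasDerivAt_Ffun hx1).deriv]
  have h1 : (0:ℝ) < (1 - x^2)^4 := pow_pos (by linarith) 4
  have h2 : 0 < 2*x*(2 - 3*x^2) := by nlinarith [hx.1]
  exact mul_pos (Real.exp_pos _) (div_pos h2 h1)

lemma strictAntiOn_Ffun : StrictAntiOn Ffun (Ico rstar 1) := by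
  apply strictAntiOn_of_deriv_neg (convex_Ico _ _)
  · intro x hx
    have hx2 : x ^ 2 < 1 := by nlinarith [hx.1, hx.2, rstar_nonneg]
    exact (continuousAt_Ffun hx2).continuousWithinAt
  intro x hx
  rw [interior_Ico] at hx
  have hxpos : 0 < x := lt_of_le_of_lt rstar_nonneg hx.1
  have hx1 : x ^ 2 < 1 := by nlinarith [hx.2]
  have hx2 : 2/3 < x ^ 2 := by
    have := rstar_sq; nlinarith [hx.1, rstar_nonneg]
  rw [(hasDerivAt_Ffun hx1).deriv]
  have h1 : (0:ℝ) < (1 - x^2)^4 := pow_pos (by linarith) 4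
  have h2 : 2*x*(2 - 3*x^2) < 0 := by nlinarith
  have h3 := Real.exp_pos (1 - (1 - x^2)⁻¹)
  exact mul_neg_of_pos_of_neg h3 (div_neg_of_neg_of_pos h2 h1)

lemma Ffun_nonpos {r : ℝ} (h0 : 0 ≤ r) (h1 : r ≤ phi0) : Ffun r ≤ 0 := by
  have hφ := phi0_sq
  have hr1 : r < 1 := lt_of_le_of_lt h1 phi0_lt_one
  have hu : (0:ℝ) < 1 - r^2 := by nlinarith
  have hg : r^2 * ((1 - r^2)^2)⁻¹ ≤ 1 := by
    rw [← div_eq_mul_inv, div_le_one (by positivity)]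
    have hA : 0 ≤ (phi0 - r) * (r + phi0 + 1) :=
      mul_nonneg (by linarith) (by nlinarith [phi0_pos])
    have hB : (0:ℝ) < 1 + r - r^2 := by nlinarith
    nlinarith [mul_nonneg hA hB.le]
  have := Real.exp_pos (1 - (1 - r^2)⁻¹)
  unfold Ffun; nlinarith

lemma Ffun_pos {r : ℝ} (h0 : phi0 < r) (h1 : r < 1) : 0 < Ffun r := by
  have hφ := phi0_sq
  have hrpos : 0 < r := lt_trans phi0_pos h0
  have hu : (0:ℝ) < 1 - r^2 := by nlinarith
  have hg : 1 < r^2 * ((1 - r^2)^2)⁻¹ := by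
    rw [← div_eq_mul_inv, lt_div_iff₀ (by positivity)]
    have hA : 0 < (r - phi0) * (r + phi0 + 1) :=
      mul_pos (by linarith) (by nlinarith [phi0_pos])
    have hB : (0:ℝ) < 1 + r - r^2 := by nlinarith
    nlinarith [mul_pos hA hB]
  have := Real.exp_pos (1 - (1 - r^2)⁻¹)
  unfold Ffun; nlinarith

def Mconst : ℝ := Ffun rstar

lemma Mconst_pos : 0 < Mconst := Ffun_pos phi0_lt_rstar rstar_lt_one

lemma Ffun_phi0 : Ffun phi0 = 0 := by
  have hφ := phi0_sq
  have hp := phi0_pos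
  have hu : 1 - phi0 ^ 2 = phi0 := by linarith
  unfold Ffun
  rw [hu]
  rw [mul_inv_cancel₀ (pow_ne_zero 2 hp.ne')]
  ring

def Cz : ℝ := 1 / Mconst + 1

lemma Cz_pos : 0 < Cz := by
  have h := div_pos one_pos Mconst_pos
  unfold Cz; linarith

lemma C_pos {C : ℝ} (hC : Cz ≤ C) : 0 < C := lt_of_lt_of_le Cz_pos hC

lemma oneDivC_pos {C : ℝ} (hC : Cz ≤ C) : 0 < 1 / C := by
  have := C_pos hC; positivity

lemma oneDivC_lt_M {C : ℝ} (hC : Cz ≤ C) : 1 / C < Mconst := by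
  have hM := Mconst_pos
  have hCpos := C_pos hC
  rw [div_lt_iff₀ hCpos]
  have : 1 / Mconst + 1 ≤ C := hC
  have h2 : Mconst * (1 / Mconst + 1) = 1 + Mconst := by field_simp
  nlinarith

lemma exists_root_lo {C : ℝ} (hC : Cz ≤ C) : ∃ r, r ∈ Ioo phi0 rstar ∧ Ffun r = 1 / C := by
  have hsub := intermediate_value_Ioo (le_of_lt phi0_lt_rstar)
    (contOn_Ffun phi0_pos.le rstar_lt_one)
  have hmem : 1 / C ∈ Ioo (Ffun phi0) (Ffun rstar) := by
    rw [Ffun_phi0]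
    exact ⟨oneDivC_pos hC, oneDivC_lt_M hC⟩
  obtain ⟨r, hr, hFr⟩ := hsub hmem
  exact ⟨r, hr, hFr⟩

lemma exists_near_one {C : ℝ} (hC : Cz ≤ C) : ∃ b, b ∈ Ioo rstar 1 ∧ Ffun b < 1 / C := by
  have hδ : 0 < 1 / C := oneDivC_pos hC
  have ht : Tendsto (fun x : ℝ => x ^ 2 * Real.exp (-x)) atTop (nhds 0) :=
    Real.tendsto_pow_mul_exp_neg_atTop_nhds_zero 2
  have hev : ∀ᶠ x in atTop, x ^ 2 * Real.exp (-x) < (1 / C) / Real.exp 1 :=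
    ht.eventually_lt_const (by positivity)
  obtain ⟨x₀, hx₀⟩ := eventually_atTop.1 hev
  set x : ℝ := max x₀ 10 with hxdef
  have hx10 : (10:ℝ) ≤ x := le_max_right _ _
  have hxpos : (0:ℝ) < x := by linarith
  have hbound := hx₀ x (le_max_left _ _)
  set b : ℝ := Real.sqrt (1 - 1/x) with hbdef
  have h1x : 0 ≤ 1 - 1/x := by
    have : 1/x ≤ 1/10 := by
      apply one_div_le_one_div_of_le <;> linarith
    linarith
  have hb2 : b ^ 2 = 1 - 1/x := Real.sq_sqrt h1x
  have hbnn : 0 ≤ b := Real.sqrt_nonneg _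
  have hb1 : b < 1 := by nlinarith [div_pos one_pos hxpos]
  have hbr : rstar < b := by
    have h2 : rstar ^ 2 < b ^ 2 := by
      rw [hb2, rstar_sq]
      have : 1/x ≤ 1/10 := by
        apply one_div_le_one_div_of_le <;> linarith
      linarith
    nlinarith [rstar_nonneg]
  refine ⟨b, ⟨hbr, hb1⟩, ?_⟩
  have hub : 1 - b ^ 2 = x⁻¹ := by rw [hb2]; ring
  have hFb : Ffun b = Real.exp (1 - x) * (b ^ 2 * x ^ 2 - 1) := by
    unfold Ffun
    rw [hub, inv_inv, ← inv_pow, inv_inv]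
  have hb2le : b ^ 2 ≤ 1 := by nlinarith
  have step1 : Ffun b ≤ Real.exp (1 - x) * x ^ 2 := by
    rw [hFb]
    apply mul_le_mul_of_nonneg_left _ (Real.exp_pos _).le
    nlinarith
  have step2 : Real.exp (1 - x) * x ^ 2 = Real.exp 1 * (x ^ 2 * Real.exp (-x)) := by
    rw [show (1:ℝ) - x = 1 + -x by ring, Real.exp_add]
    ring
  have hE1 := Real.exp_pos 1
  calc Ffun b ≤ Real.exp 1 * (x ^ 2 * Real.exp (-x)) := by rw [← step2]; exact step1
    _ < Real.exp 1 * ((1 / C) / Real.exp 1) := by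
        exact mul_lt_mul_of_pos_left hbound hE1
    _ = 1 / C := by
        field_simp


lemma exists_root_hi {C : ℝ} (hC : Cz ≤ C) : ∃ r, r ∈ Ioo rstar 1 ∧ Ffun r = 1 / C := by
  obtain ⟨b, ⟨hbr, hb1⟩, hFb⟩ := exists_near_one hC
  have hsub := intermediate_value_Ioo' (le_of_lt hbr) (contOn_Ffun rstar_nonneg hb1)
  have hmem : 1 / C ∈ Ioo (Ffun b) (Ffun rstar) := ⟨hFb, oneDivC_lt_M hC⟩
  obtain ⟨r, hr, hFr⟩ := hsub hmem
  exact ⟨r, ⟨hr.1, lt_trans hr.2 hb1⟩, hFr⟩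

open Classical in
def rmaxf (C : ℝ) : ℝ :=
  if h : ∃ r, r ∈ Ioo phi0 rstar ∧ Ffun r = 1 / C then h.choose else phi0

open Classical in
def rminf (C : ℝ) : ℝ :=
  if h : ∃ r, r ∈ Ioo rstar 1 ∧ Ffun r = 1 / C then h.choose else rstar

lemma rmaxf_spec {C : ℝ} (hC : Cz ≤ C) :
    rmaxf C ∈ Ioo phi0 rstar ∧ Ffun (rmaxf C) = 1 / C := by
  have h := exists_root_lo hC
  unfold rmaxf
  rw [dif_pos h]
  exact h.choose_spec

lemma rminf_spec {C : ℝ} (hC : Cz ≤ C) :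
    rminf C ∈ Ioo rstar 1 ∧ Ffun (rminf C) = 1 / C := by
  have h := exists_root_hi hC
  unfold rminf
  rw [dif_pos h]
  exact h.choose_spec

lemma rmax_unique {C : ℝ} (hC : Cz ≤ C) {r : ℝ} (h0 : 0 ≤ r) (h1 : r ≤ rstar)
    (hF : Ffun r = 1 / C) : r = rmaxf C := by
  obtain ⟨⟨ha, hb⟩, hFm⟩ := rmaxf_spec hC
  exact strictMonoOn_Ffun.injOn ⟨h0, h1⟩
    ⟨le_trans phi0_pos.le ha.le, hb.le⟩ (by rw [hF, hFm])

lemma rmin_unique {C : ℝ} (hC : Cz ≤ C) {r : ℝ} (h0 : rstar ≤ r) (h1 : r < 1)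
    (hF : Ffun r = 1 / C) : r = rminf C := by
  obtain ⟨⟨ha, hb⟩, hFm⟩ := rminf_spec hC
  exact strictAntiOn_Ffun.injOn ⟨h0, h1⟩ ⟨ha.le, hb⟩ (by rw [hF, hFm])


lemma Gfun_eq (C : ℝ) :
    Gfun C = fun r => r ^ 2 * (C * Real.exp 1 * expNegInvGlue (1 - r ^ 2) + 1) := by
  funext r
  unfold Gfun
  by_cases h : |r| < 1
  · rw [if_pos h]
    have h2 : r ^ 2 < 1 := by rw [sq_lt_one_iff_abs_lt_one]; exact h
    have hu : (0:ℝ) < 1 - r ^ 2 := by linarith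
    rw [expNegInvGlue, if_neg (not_le.2 hu)]
    rw [show (1:ℝ) - 1 / (1 - r ^ 2) = 1 + -(1 - r^2)⁻¹ by rw [one_div]; ring, Real.exp_add]
    ring
  · rw [if_neg h]
    have h2 : 1 ≤ r ^ 2 := by
      by_contra hc
      exact h (by rw [← sq_lt_one_iff_abs_lt_one]; linarith)
    rw [expNegInvGlue.zero_of_nonpos (by linarith)]
    ring

lemma Gfun_continuous (C : ℝ) : Continuous (Gfun C) := by
  rw [Gfun_eq]
  have h1 : Continuous expNegInvGlue := (expNegInvGlue.contDiff (n := 0)).continuous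
  exact (continuous_pow 2).mul
    ((continuous_const.mul (h1.comp (continuous_const.sub (continuous_pow 2)))).add
      continuous_const)

lemma Gfun_hasDerivAt (C : ℝ) {r : ℝ} (h : r ^ 2 < 1) :
    HasDerivAt (Gfun C) (2 * r * (1 - C * Ffun r)) r := by
  have hu : (1:ℝ) - r ^ 2 ≠ 0 := by nlinarith
  have h1 : HasDerivAt (fun r : ℝ => 1 - r ^ 2) (-(2 * r)) r := by
    simpa using (hasDerivAt_pow 2 r).const_sub 1
  have h2 : HasDerivAt (fun r : ℝ => (1 - r ^ 2)⁻¹) (-(-(2 * r)) / (1 - r^2)^2) r := h1.inv hu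
  have h3 : HasDerivAt (fun r : ℝ => 1 - (1 - r ^ 2)⁻¹) (-(-(-(2 * r)) / (1 - r^2)^2)) r :=
    h2.const_sub 1
  have hE : HasDerivAt (fun r : ℝ => C * Real.exp (1 - (1 - r ^ 2)⁻¹) + 1)
      (C * (Real.exp (1 - (1 - r^2)⁻¹) * (-(-(-(2 * r)) / (1 - r^2)^2)))) r :=
    (h3.exp.const_mul C).add_const 1
  have hf : HasDerivAt (fun r : ℝ => r ^ 2 * (C * Real.exp (1 - (1 - r ^ 2)⁻¹) + 1))
      ((↑2 * r ^ 1) * (C * Real.exp (1 - (1 - r^2)⁻¹) + 1) +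
        r ^ 2 * (C * (Real.exp (1 - (1 - r^2)⁻¹) * (-(-(-(2 * r)) / (1 - r^2)^2))))) r :=
    (hasDerivAt_pow 2 r).mul hE
  have heq : Gfun C =ᶠ[nhds r] fun r : ℝ => r ^ 2 * (C * Real.exp (1 - (1 - r ^ 2)⁻¹) + 1) := by
    have hopen : IsOpen {x : ℝ | x ^ 2 < 1} :=
      isOpen_lt (by fun_prop) continuous_const
    filter_upwards [hopen.mem_nhds h] with x hx
    have : |x| < 1 := by rwa [← sq_lt_one_iff_abs_lt_one]
    unfold Gfun
    rw [if_pos this, one_div]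
  have hG : HasDerivAt (Gfun C)
      ((↑2 * r ^ 1) * (C * Real.exp (1 - (1 - r^2)⁻¹) + 1) +
        r ^ 2 * (C * (Real.exp (1 - (1 - r^2)⁻¹) * (-(-(-(2 * r)) / (1 - r^2)^2))))) r :=
    hf.congr_of_eventuallyEq heq
  convert hG using 1
  unfold Ffun
  field_simp
  ring

lemma deriv_Gfun (C : ℝ) {r : ℝ} (h : r ^ 2 < 1) :
    deriv (Gfun C) r = 2 * r * (1 - C * Ffun r) :=
  (Gfun_hasDerivAt C h).deriv

lemma mono1 {C : ℝ} (hC : Cz ≤ C) : StrictMonoOn (Gfun C) (Icc 0 (rmaxf C)) := by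
  obtain ⟨⟨ha1, ha2⟩, hFa⟩ := rmaxf_spec hC
  apply strictMonoOn_of_deriv_pos (convex_Icc _ _) (Gfun_continuous C).continuousOn
  intro x hx
  rw [interior_Icc] at hx
  obtain ⟨hx0, hxa⟩ := hx
  have hx1 : x ^ 2 < 1 := by nlinarith [rstar_lt_one, rstar_nonneg]
  rw [deriv_Gfun C hx1]
  have hCpos := C_pos hC
  have key : C * Ffun x < 1 := by
    rcases le_or_gt x phi0 with h | h
    · have := Ffun_nonpos hx0.le h
      nlinarith
    · have hlt : Ffun x < Ffun (rmaxf C) :=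
        strictMonoOn_Ffun ⟨hx0.le, by linarith⟩ ⟨by linarith [phi0_pos], ha2.le⟩ hxa
      rw [hFa] at hlt
      have := mul_lt_mul_of_pos_left hlt hCpos
      rwa [mul_one_div, div_self hCpos.ne'] at this
  exact mul_pos (by linarith) (by linarith)

lemma anti1 {C : ℝ} (hC : Cz ≤ C) : StrictAntiOn (Gfun C) (Icc (rmaxf C) (rminf C)) := by
  obtain ⟨⟨ha1, ha2⟩, hFa⟩ := rmaxf_spec hC
  obtain ⟨⟨hb1, hb2⟩, hFb⟩ := rminf_spec hC
  apply strictAntiOn_of_deriv_neg (convex_Icc _ _) (Gfun_continuous C).continuousOn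
  intro x hx
  rw [interior_Icc] at hx
  obtain ⟨hxa, hxb⟩ := hx
  have hx0 : 0 < x := by linarith [phi0_pos]
  have hx1 : x ^ 2 < 1 := by nlinarith
  rw [deriv_Gfun C hx1]
  have hCpos := C_pos hC
  have key : 1 < C * Ffun x := by
    have hlt : 1 / C < Ffun x := by
      rcases le_or_gt x rstar with h | h
      · have : Ffun (rmaxf C) < Ffun x :=
          strictMonoOn_Ffun ⟨by linarith [phi0_pos], ha2.le⟩ ⟨hx0.le, h⟩ hxa
        rwa [hFa] at this
      · have : Ffun (rminf C) < Ffun x :=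
          strictAntiOn_Ffun ⟨h.le, by linarith⟩ ⟨hb1.le, hb2⟩ hxb
        rwa [hFb] at this
    rw [div_lt_iff₀ hCpos] at hlt
    linarith [mul_comm C (Ffun x)]
  exact mul_neg_of_pos_of_neg (by linarith) (by linarith)

lemma mono2 {C : ℝ} (hC : Cz ≤ C) : StrictMonoOn (Gfun C) (Icc (rminf C) 1) := by
  obtain ⟨⟨hb1, hb2⟩, hFb⟩ := rminf_spec hC
  apply strictMonoOn_of_deriv_pos (convex_Icc _ _) (Gfun_continuous C).continuousOn
  intro x hx
  rw [interior_Icc] at hx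
  obtain ⟨hxb, hx1'⟩ := hx
  have hx0 : 0 < x := by linarith [rstar_nonneg]
  have hx1 : x ^ 2 < 1 := by nlinarith
  rw [deriv_Gfun C hx1]
  have hCpos := C_pos hC
  have key : C * Ffun x < 1 := by
    have hlt : Ffun x < 1 / C := by
      have : Ffun x < Ffun (rminf C) :=
        strictAntiOn_Ffun ⟨hb1.le, hb2⟩ ⟨by linarith, hx1'⟩ hxb
      rwa [hFb] at this
    rw [lt_div_iff₀ hCpos] at hlt
    linarith [mul_comm C (Ffun x)]
  exact mul_pos (by linarith) (by linarith)

lemma crit_set {C : ℝ} (hC : Cz ≤ C) :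
    {r ∈ Ioo (0:ℝ) 1 | deriv (Gfun C) r = 0} = {rmaxf C, rminf C} := by
  obtain ⟨⟨ha1, ha2⟩, hFa⟩ := rmaxf_spec hC
  obtain ⟨⟨hb1, hb2⟩, hFb⟩ := rminf_spec hC
  have hCpos := C_pos hC
  ext r
  simp only [mem_setOf_eq, mem_insert_iff, mem_singleton_iff, mem_Ioo]
  constructor
  · rintro ⟨⟨hr0, hr1⟩, hd⟩
    have hx1 : r ^ 2 < 1 := by nlinarith
    rw [deriv_Gfun C hx1] at hd
    have hF : Ffun r = 1 / C := by
      rcases mul_eq_zero.1 hd with h | h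
      · nlinarith
      · rw [eq_div_iff hCpos.ne']
        linarith [mul_comm C (Ffun r)]
    rcases le_or_gt r rstar with h | h
    · left; exact rmax_unique hC hr0.le h hF
    · right; exact rmin_unique hC h.le hr1 hF
  · rintro (rfl | rfl)
    · refine ⟨⟨by linarith [phi0_pos], by linarith [rstar_lt_one]⟩, ?_⟩
      have hx1 : (rmaxf C) ^ 2 < 1 := by nlinarith [phi0_pos, rstar_lt_one]
      rw [deriv_Gfun C hx1, hFa, mul_one_div, div_self hCpos.ne']
      ring
    · refine ⟨⟨by linarith [rstar_nonneg], hb2⟩, ?_⟩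
      have hx1 : (rminf C) ^ 2 < 1 := by nlinarith [rstar_nonneg]
      rw [deriv_Gfun C hx1, hFb, mul_one_div, div_self hCpos.ne']
      ring

lemma helper_one_div {M C : ℝ} (hM : 0 < M) (hC : 1 / M + 1 ≤ C) : 1 / C < M := by
  have hCpos : 0 < C := lt_of_lt_of_le (by positivity) hC
  rw [div_lt_iff₀ hCpos]
  have h2 : M * (1 / M + 1) = 1 + M := by field_simp
  nlinarith

lemma tendsto_rmaxf : Tendsto rmaxf atTop (nhds phi0) := by
  rw [tendsto_order]
  constructor
  · intro a ha
    filter_upwards [eventually_ge_atTop Cz] with C hC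
    exact lt_trans ha (rmaxf_spec hC).1.1
  · intro b hb
    rcases le_or_gt rstar b with h | h
    · filter_upwards [eventually_ge_atTop Cz] with C hC
      exact lt_of_lt_of_le (rmaxf_spec hC).1.2 h
    · have hb1 : b < 1 := lt_trans h rstar_lt_one
      have hFb : 0 < Ffun b := Ffun_pos hb hb1
      filter_upwards [eventually_ge_atTop Cz, eventually_ge_atTop (1 / Ffun b + 1)]
        with C hC hC2
      obtain ⟨⟨ha1, ha2⟩, hFa⟩ := rmaxf_spec hC
      have h1C : 1 / C < Ffun b := helper_one_div hFb hC2
      have hlt : Ffun (rmaxf C) < Ffun b := by rw [hFa]; exact h1C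
      have := strictMonoOn_Ffun.lt_iff_lt
        (a := rmaxf C) (b := b) ⟨by linarith [phi0_pos], ha2.le⟩
        ⟨by linarith [phi0_pos], h.le⟩
      exact this.1 hlt
  
lemma tendsto_rminf : Tendsto rminf atTop (nhds 1) := by
  rw [tendsto_order]
  constructor
  · intro a ha
    rcases le_or_gt a rstar with h | h
    · filter_upwards [eventually_ge_atTop Cz] with C hC
      exact lt_of_le_of_lt h (rminf_spec hC).1.1
    · have hFa : 0 < Ffun a := Ffun_pos (lt_trans phi0_lt_rstar h) ha
      filter_upwards [eventually_ge_atTop Cz, eventually_ge_atTop (1 / Ffun a + 1)]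
        with C hC hC2
      obtain ⟨⟨hb1, hb2⟩, hFb⟩ := rminf_spec hC
      have h1C : 1 / C < Ffun a := helper_one_div hFa hC2
      have hlt : Ffun (rminf C) < Ffun a := by rw [hFb]; exact h1C
      have := strictAntiOn_Ffun.lt_iff_gt
        (a := rminf C) (b := a) ⟨hb1.le, hb2⟩ ⟨h.le, ha⟩
      exact this.1 hlt
  · intro b hb
    filter_upwards [eventually_ge_atTop Cz] with C hC
    exact lt_trans (rminf_spec hC).1.2 hb

/-- For `C` sufficiently large, `G` has exactly two critical points
`0 < r_max < r_min < 1` in `(0,1)`, is increasing–decreasing–increasing on the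
corresponding intervals, and `r_max → (√5 − 1)/2`, `r_min → 1` as `C → ∞`. -/
theorem stmt17 :
    ∃ C₀ : ℝ, 0 < C₀ ∧ ∃ rmax rmin : ℝ → ℝ,
      (∀ C : ℝ, C₀ ≤ C →
        0 < rmax C ∧ rmax C < rmin C ∧ rmin C < 1 ∧
        {r ∈ Ioo (0:ℝ) 1 | deriv (Gfun C) r = 0} = {rmax C, rmin C} ∧
        StrictMonoOn (Gfun C) (Icc 0 (rmax C)) ∧
        StrictAntiOn (Gfun C) (Icc (rmax C) (rmin C)) ∧
        StrictMonoOn (Gfun C) (Icc (rmin C) 1)) ∧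
      Tendsto rmax atTop (nhds ((Real.sqrt 5 - 1) / 2)) ∧
      Tendsto rmin atTop (nhds 1) := by
  refine ⟨Cz, Cz_pos, rmaxf, rminf, ?_, tendsto_rmaxf, tendsto_rminf⟩
  intro C hC
  obtain ⟨⟨ha1, ha2⟩, hFa⟩ := rmaxf_spec hC
  obtain ⟨⟨hb1, hb2⟩, hFb⟩ := rminf_spec hC
  exact ⟨lt_trans phi0_pos ha1, lt_trans ha2 hb1, hb2, crit_set hC,
    mono1 hC, anti1 hC, mono2 hC⟩

end
end
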